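/- arXiv:1302.5791 — 4 statements merged into one kernel-verified Lean document; each statement's English description precedes it below -/
import Mathlib

section
/- Let h1, g1, h2, g2 be analytic on the unit disk with h1 - g1 = z and h2 - g2 = z. If Re (h1*h2)'(z) > 1/2 for all z in the unit disk, then |(g1*g2)'(z)| < |(h1*h2)'(z)| for all z in the unit disk; i.e., the harmonic convolution f1*f2 is sense-preserving. -/
/-! Comparing coefficients in `hᵢ - gᵢ = z` gives `aᵢ n = bᵢ n` for `n ≠ 1`, so the coefficient
sequences satisfy `a₁ a₂ - b₁ b₂ = δ₁`, i.e. `(h₁ * h₂) - (g₁ * g₂) = z`. Hence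
`(g₁ * g₂)' = (h₁ * h₂)' - 1`, and for `w = (h₁ * h₂)'` the condition `Re w > 1/2` says exactly
that `w` is closer to `0` than to `1`. -/

open FormalMultilinearSeries
open scoped ENNReal

section PowerSeries

variable {𝕜 : Type*} [NontriviallyNormedField 𝕜]

theorem coeff_eq_zero_of_hasSum_zero {c : ℕ → 𝕜} {r : ℝ} (hr : 0 < r)
    (h : ∀ z : 𝕜, ‖z‖ < r → HasSum (fun n => c n * z ^ n) 0) : c = 0 := by
  obtain ⟨w, hw0, hwr⟩ := NormedField.exists_norm_lt 𝕜 hr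
  set p := ofScalars 𝕜 c
  have hrad : (‖w‖₊ : ℝ≥0∞) ≤ p.radius := by
    refine p.le_radius_of_tendsto (l := 0) ?_
    simpa [p, ofScalars_norm, norm_mul, norm_pow] using
      (h w hwr).summable.tendsto_atTop_zero.norm
  have hp : HasFPowerSeriesOnBall (0 : 𝕜 → 𝕜) p 0 ‖w‖₊ := by
    refine ⟨hrad, by simpa using hw0, fun {y} hy => ?_⟩
    have hy : ‖y‖ < ‖w‖ := by simpa using hy
    simpa [p, ofScalars_apply_eq, mul_comm] using h y (hy.trans hwr)
  exact (ofScalars_series_eq_zero 𝕜).mp hp.hasFPowerSeriesAt.eq_zero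

theorem sub_eq_single_one_of_tsum_sub_tsum_eq_id {a b : ℕ → 𝕜} {r : ℝ} (hr : 0 < r)
    (ha : ∀ z : 𝕜, ‖z‖ < r → Summable fun n => a n * z ^ n)
    (hb : ∀ z : 𝕜, ‖z‖ < r → Summable fun n => b n * z ^ n)
    (hab : ∀ z : 𝕜, ‖z‖ < r → (∑' n, a n * z ^ n) - (∑' n, b n * z ^ n) = z) :
    a - b = Pi.single 1 1 := by
  refine sub_eq_zero.mp (coeff_eq_zero_of_hasSum_zero hr fun z hz => ?_)
  have hz1 : HasSum (fun n => (Pi.single 1 1 : ℕ → 𝕜) n * z ^ n) z := by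
    simpa using hasSum_single (f := fun n => (Pi.single 1 1 : ℕ → 𝕜) n * z ^ n) 1
      fun n hn => by simp [hn]
  have hsum := ((ha z hz).hasSum.sub (hb z hz).hasSum).sub hz1
  rw [hab z hz, sub_self] at hsum
  simpa only [Pi.sub_apply, sub_mul] using hsum

theorem mul_sub_mul_eq_single_one {a₁ b₁ a₂ b₂ : ℕ → 𝕜}
    (h₁ : a₁ - b₁ = Pi.single 1 1) (h₂ : a₂ - b₂ = Pi.single 1 1)
    (hb₁ : b₁ 1 = 0) (hb₂ : b₂ 1 = 0) :
    a₁ * a₂ - b₁ * b₂ = Pi.single 1 1 := by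
  ext n
  have e₁ := congrFun h₁ n
  have e₂ := congrFun h₂ n
  rcases eq_or_ne n 1 with rfl | hn
  · simp_all [sub_eq_iff_eq_add]
  · simp_all [sub_eq_zero]

theorem hasSum_derivSeries_sub_one {A B : ℕ → 𝕜} (hAB : A - B = Pi.single 1 1) {z s : 𝕜}
    (hA : HasSum (fun n => ((n + 1 : ℕ) : 𝕜) * A (n + 1) * z ^ n) s) :
    HasSum (fun n => ((n + 1 : ℕ) : 𝕜) * B (n + 1) * z ^ n) (s - 1) := by
  have hterm : (fun n => ((n + 1 : ℕ) : 𝕜) * B (n + 1) * z ^ n) =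
      fun n => ((n + 1 : ℕ) : 𝕜) * A (n + 1) * z ^ n - if n = 0 then 1 else 0 := by
    funext n
    have hn := congrFun hAB (n + 1)
    rcases n with _ | n
    · simp_all [sub_eq_iff_eq_add]
    · simp_all [sub_eq_zero]
  rw [hterm]
  exact hA.sub (hasSum_ite_eq (0 : ℕ) (1 : 𝕜))

end PowerSeries

theorem Complex.norm_sub_one_lt_norm {w : ℂ} (hw : 1 / 2 < w.re) : ‖w - 1‖ < ‖w‖ := by
  have : ‖w - 1‖ ^ 2 < ‖w‖ ^ 2 := by
    simp only [Complex.sq_norm, Complex.normSq_apply, Complex.sub_re, Complex.sub_im,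
      Complex.one_re, Complex.one_im]
    nlinarith
  exact lt_of_pow_lt_pow_left₀ 2 (norm_nonneg _) this

theorem stmt2_general (a1 b1 a2 b2 : ℕ → ℂ)
    (hb11 : b1 1 = 0) (hb21 : b2 1 = 0)
    (hs1 : ∀ z : ℂ, ‖z‖ < 1 → Summable fun n => a1 n * z ^ n)
    (hs2 : ∀ z : ℂ, ‖z‖ < 1 → Summable fun n => b1 n * z ^ n)
    (hs3 : ∀ z : ℂ, ‖z‖ < 1 → Summable fun n => a2 n * z ^ n)
    (hs4 : ∀ z : ℂ, ‖z‖ < 1 → Summable fun n => b2 n * z ^ n)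
    (hdiff1 : ∀ z : ℂ, ‖z‖ < 1 →
      (∑' n : ℕ, a1 n * z ^ n) - (∑' n : ℕ, b1 n * z ^ n) = z)
    (hdiff2 : ∀ z : ℂ, ‖z‖ < 1 →
      (∑' n : ℕ, a2 n * z ^ n) - (∑' n : ℕ, b2 n * z ^ n) = z)
    (hre : ∀ z : ℂ, ‖z‖ < 1 →
      (1 : ℝ) / 2 < (∑' n : ℕ, ((n + 1 : ℕ) : ℂ) * (a1 (n + 1) * a2 (n + 1)) * z ^ n).re) :
    ∀ z : ℂ, ‖z‖ < 1 →
      ‖∑' n : ℕ, ((n + 1 : ℕ) : ℂ) * (b1 (n + 1) * b2 (n + 1)) * z ^ n‖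
        < ‖∑' n : ℕ, ((n + 1 : ℕ) : ℂ) * (a1 (n + 1) * a2 (n + 1)) * z ^ n‖ := by
  intro z hz
  have hconv : a1 * a2 - b1 * b2 = Pi.single 1 1 :=
    mul_sub_mul_eq_single_one (sub_eq_single_one_of_tsum_sub_tsum_eq_id one_pos hs1 hs2 hdiff1)
      (sub_eq_single_one_of_tsum_sub_tsum_eq_id one_pos hs3 hs4 hdiff2) hb11 hb21
  set A := ∑' n : ℕ, ((n + 1 : ℕ) : ℂ) * (a1 (n + 1) * a2 (n + 1)) * z ^ n
  have hsum : Summable fun n : ℕ => ((n + 1 : ℕ) : ℂ) * (a1 (n + 1) * a2 (n + 1)) * z ^ n := by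
    -- a divergent `tsum` is `0`, which `hre` rules out
    by_contra h
    have := hre z hz
    rw [tsum_eq_zero_of_not_summable h, Complex.zero_re] at this
    norm_num at this
  have hB : HasSum (fun n : ℕ => ((n + 1 : ℕ) : ℂ) * (b1 (n + 1) * b2 (n + 1)) * z ^ n) (A - 1) :=
    hasSum_derivSeries_sub_one hconv hsum.hasSum
  rw [hB.tsum_eq]
  exact Complex.norm_sub_one_lt_norm (hre z hz)

/-- If `h₁ - g₁ = z`, `h₂ - g₂ = z` and `Re (h₁*h₂)' > 1/2` on the unit disk, then
`|(g₁*g₂)'| < |(h₁*h₂)'|` on the unit disk: the harmonic convolution is sense-preserving. -/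
theorem stmt2 (a1 b1 a2 b2 : ℕ → ℂ)
    (ha10 : a1 0 = 0) (ha11 : a1 1 = 1) (hb10 : b1 0 = 0) (hb11 : b1 1 = 0)
    (ha20 : a2 0 = 0) (ha21 : a2 1 = 1) (hb20 : b2 0 = 0) (hb21 : b2 1 = 0)
    (hs1 : ∀ z : ℂ, ‖z‖ < 1 → Summable fun n => a1 n * z ^ n)
    (hs2 : ∀ z : ℂ, ‖z‖ < 1 → Summable fun n => b1 n * z ^ n)
    (hs3 : ∀ z : ℂ, ‖z‖ < 1 → Summable fun n => a2 n * z ^ n)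
    (hs4 : ∀ z : ℂ, ‖z‖ < 1 → Summable fun n => b2 n * z ^ n)
    (hdiff1 : ∀ z : ℂ, ‖z‖ < 1 →
      (∑' n : ℕ, a1 n * z ^ n) - (∑' n : ℕ, b1 n * z ^ n) = z)
    (hdiff2 : ∀ z : ℂ, ‖z‖ < 1 →
      (∑' n : ℕ, a2 n * z ^ n) - (∑' n : ℕ, b2 n * z ^ n) = z)
    (hre : ∀ z : ℂ, ‖z‖ < 1 →
      (1 : ℝ) / 2 < (∑' n : ℕ, ((n + 1 : ℕ) : ℂ) * (a1 (n + 1) * a2 (n + 1)) * z ^ n).re) :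
    ∀ z : ℂ, ‖z‖ < 1 →
      ‖∑' n : ℕ, ((n + 1 : ℕ) : ℂ) * (b1 (n + 1) * b2 (n + 1)) * z ^ n‖
        < ‖∑' n : ℕ, ((n + 1 : ℕ) : ℂ) * (a1 (n + 1) * a2 (n + 1)) * z ^ n‖ :=
  stmt2_general a1 b1 a2 b2 hb11 hb21 hs1 hs2 hs3 hs4 hdiff1 hdiff2 hre
end

section
/- Let F be analytic on the unit disk with F(0) = 0, F'(0) = 1, and Re(z F''(z) + F'(z)) > 1/2 for all z in the unit disk. Then Re F'(z) ≥ log 2 > 1/2 for all z in the unit disk. -/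
/-!
Write `G = (z F')' = z F'' + F'`, so that `F'(z) = ∫₀¹ G(tz) dt`. Since `2G - 1` has positive real
part and equals `1` at the origin, Harnack's inequality gives `Re G(w) ≥ 1 / (1 + |w|)`, hence
`Re F'(z) ≥ ∫₀¹ dt / (1 + t) = log 2`.
-/

open Metric Set Complex MeasureTheory intervalIntegral

lemma norm_sub_one_div_add_one_lt_one {w : ℂ} (hw : 0 < w.re) : ‖(w - 1) / (w + 1)‖ < 1 := by
  have hlt : ‖w - 1‖ < ‖w + 1‖ := by
    rw [← sq_lt_sq₀ (norm_nonneg _) (norm_nonneg _), Complex.sq_norm, Complex.sq_norm,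
      normSq_apply, normSq_apply]
    simp only [sub_re, sub_im, add_re, add_im, one_re, one_im]
    nlinarith
  rw [norm_div, div_lt_one ((norm_nonneg _).trans_lt hlt)]
  exact hlt

lemma div_le_re_one_add_div_one_sub {u : ℂ} {r : ℝ} (hu : ‖u‖ ≤ r) (hr : r < 1) :
    (1 - r) / (1 + r) ≤ ((1 + u) / (1 - u)).re := by
  have hu2 : u.re ^ 2 + u.im ^ 2 ≤ r ^ 2 := by
    have := pow_le_pow_left₀ (norm_nonneg u) hu 2
    rw [Complex.sq_norm, normSq_apply] at this
    nlinarith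
  have hre : -r ≤ u.re := (abs_le.1 ((abs_re_le_norm u).trans hu)).1
  have hden : 0 < normSq (1 - u) := by
    rw [normSq_pos, sub_ne_zero]
    rintro rfl
    simp at hu; linarith
  rw [div_re, ← add_div, div_le_div_iff₀ (by linarith [(norm_nonneg u).trans hu]) hden]
  simp only [normSq_apply, add_re, add_im, sub_re, sub_im, one_re, one_im] at hden ⊢
  nlinarith [mul_nonneg (sub_nonneg.mpr hr.le) (neg_le_iff_add_nonneg.1 hre)]

/-- Harnack's inequality for `Re h > 0`: Schwarz's lemma applied to the Cayley transform
`(h - 1) / (h + 1)`. -/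
theorem one_sub_norm_div_one_add_norm_le_re {h : ℂ → ℂ} (hd : DifferentiableOn ℂ h (ball 0 1))
    (h0 : h 0 = 1) (hre : ∀ w ∈ ball (0 : ℂ) 1, 0 < (h w).re) {z : ℂ} (hz : z ∈ ball (0 : ℂ) 1) :
    (1 - ‖z‖) / (1 + ‖z‖) ≤ (h z).re := by
  have hne : ∀ w ∈ ball (0 : ℂ) 1, h w + 1 ≠ 0 := fun w hw hc => by
    have := hre w hw
    rw [eq_neg_of_add_eq_zero_left hc] at this
    norm_num at this
  set φ : ℂ → ℂ := fun w => (h w - 1) / (h w + 1)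
  have hφ : MapsTo φ (ball 0 1) (closedBall 0 1) := fun w hw =>
    ball_subset_closedBall (mem_ball_zero_iff.2 (norm_sub_one_div_add_one_lt_one (hre w hw)))
  have schwarz : ‖φ z‖ ≤ ‖z‖ :=
    norm_le_norm_of_mapsTo_ball ((hd.sub_const 1).div (hd.add_const 1) hne) hφ
      (by simp [φ, h0]) (mem_ball_zero_iff.1 hz)
  have cayley : h z = (1 + φ z) / (1 - φ z) := by
    have := hne z hz
    simp only [φ]
    field_simp
    ring
  rw [cayley]
  exact div_le_re_one_add_div_one_sub schwarz (mem_ball_zero_iff.1 hz)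

theorem inv_one_add_norm_le_re {g : ℂ → ℂ} (hd : DifferentiableOn ℂ g (ball 0 1)) (h0 : g 0 = 1)
    (hre : ∀ w ∈ ball (0 : ℂ) 1, 1 / 2 < (g w).re) {z : ℂ} (hz : z ∈ ball (0 : ℂ) 1) :
    (1 + ‖z‖)⁻¹ ≤ (g z).re := by
  have key := one_sub_norm_div_one_add_norm_le_re (h := fun w => 2 * g w - 1)
    ((hd.const_mul 2).sub_const 1) (by norm_num [h0])
    (fun w hw => by have := hre w hw; simp; linarith) hz
  simp only [sub_re, mul_re, re_ofNat, im_ofNat, zero_mul, sub_zero, one_re] at key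
  have hpos : 0 < 1 + ‖z‖ := by positivity
  rw [div_le_iff₀ hpos] at key
  rw [inv_le_iff_one_le_mul₀ hpos]
  nlinarith

lemma differentiableOn_mul_deriv_deriv_add_deriv {F : ℂ → ℂ} {s : Set ℂ}
    (hF : DifferentiableOn ℂ F s) (hs : IsOpen s) :
    DifferentiableOn ℂ (fun w => w * deriv (deriv F) w + deriv F w) s :=
  have hF' := (hF.analyticOnNhd hs).deriv
  (differentiableOn_id.mul hF'.deriv.differentiableOn).add hF'.differentiableOn

theorem deriv_eq_integral_deriv_mul_deriv {F : ℂ → ℂ} {R : ℝ}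
    (hF : DifferentiableOn ℂ F (ball 0 R)) {z : ℂ} (hz : z ∈ ball (0 : ℂ) R) :
    deriv F z = ∫ t in (0 : ℝ)..1, ((t • z) * deriv (deriv F) (t • z) + deriv F (t • z)) := by
  rcases eq_or_ne z 0 with rfl | hz0
  · simp
  have hF' : DifferentiableOn ℂ (deriv F) (ball 0 R) :=
    (hF.analyticOnNhd isOpen_ball).deriv.differentiableOn
  have hseg : ∀ t ∈ Icc (0 : ℝ) 1, (0 : ℂ) + t • z ∈ ball (0 : ℂ) R := fun t ht => by
    rw [zero_add]
    exact (convex_ball 0 R).smul_mem_of_zero_mem (mem_ball_self (pos_of_mem_ball hz)) hz ht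
  have hderiv : ∀ w ∈ ball (0 : ℂ) R,
      HasDerivAt (fun w => w * deriv F w) (w * deriv (deriv F) w + deriv F w) w := fun w hw =>
    ((hasDerivAt_id' w).mul (hF'.differentiableAt (isOpen_ball.mem_nhds hw)).hasDerivAt).congr_deriv
      (by ring)
  have ftc := integral_unitInterval_deriv_eq_sub (f := fun w => w * deriv F w)
    (f' := fun w => w * deriv (deriv F) w + deriv F w) (z₀ := 0) (z₁ := z)
    ((differentiableOn_mul_deriv_deriv_add_deriv hF isOpen_ball).continuousOn.comp (by fun_prop)
      hseg) (fun t ht => hderiv _ (hseg t ht))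
  simp only [zero_add, zero_mul, sub_zero, smul_eq_mul] at ftc
  exact (mul_left_cancel₀ hz0 ftc).symm

lemma integral_inv_one_add : ∫ t in (0 : ℝ)..1, (1 + t)⁻¹ = Real.log 2 := by
  rw [integral_comp_add_left (fun t => t⁻¹), integral_inv (by norm_num)]
  norm_num

theorem stmt6_general (F : ℂ → ℂ) (hF : DifferentiableOn ℂ F (Metric.ball 0 1))
    (hF'0 : deriv F 0 = 1)
    (hre : ∀ z ∈ Metric.ball (0 : ℂ) 1,
      (1 : ℝ) / 2 < (z * deriv (deriv F) z + deriv F z).re) :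
    (1 : ℝ) / 2 < Real.log 2 ∧
      ∀ z ∈ Metric.ball (0 : ℂ) 1, Real.log 2 ≤ (deriv F z).re := by
  refine ⟨by linarith [Real.log_two_gt_d9], fun z hz => ?_⟩
  set G : ℂ → ℂ := fun w => w * deriv (deriv F) w + deriv F w
  have hG : DifferentiableOn ℂ G (ball 0 1) :=
    differentiableOn_mul_deriv_deriv_add_deriv hF isOpen_ball
  have hseg : ∀ t ∈ Icc (0 : ℝ) 1, t • z ∈ ball (0 : ℂ) 1 := fun t ht =>
    (convex_ball 0 1).smul_mem_of_zero_mem (mem_ball_self one_pos) hz ht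
  have hGz : ContinuousOn (fun t : ℝ => G (t • z)) (uIcc 0 1) := by
    rw [uIcc_of_le zero_le_one]
    exact hG.continuousOn.comp (by fun_prop) hseg
  have lower : ∀ t ∈ Icc (0 : ℝ) 1, (1 + t)⁻¹ ≤ (G (t • z)).re := fun t ht =>
    calc (1 + t)⁻¹ ≤ (1 + ‖t • z‖)⁻¹ := by
          gcongr
          rw [norm_smul, Real.norm_of_nonneg ht.1]
          exact mul_le_of_le_one_right ht.1 (mem_ball_zero_iff.1 hz).le
      _ ≤ (G (t • z)).re := inv_one_add_norm_le_re hG (by simp [G, hF'0]) hre (hseg t ht)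
  rw [deriv_eq_integral_deriv_mul_deriv hF hz, ← integral_inv_one_add]
  have hGint : IntervalIntegrable (fun t : ℝ => G (t • z)) volume 0 1 := hGz.intervalIntegrable
  rw [← RCLike.re_to_complex, ← intervalIntegral_re hGint]
  have hinv : IntervalIntegrable (fun t : ℝ => (1 + t)⁻¹) volume 0 1 :=
    intervalIntegrable_inv (fun t ht => by rw [uIcc_of_le zero_le_one] at ht; linarith [ht.1])
      (by fun_prop)
  exact integral_mono_on zero_le_one hinv
    (reCLM.continuous.comp_continuousOn hGz).intervalIntegrable lower

/-- If `F` is analytic on the unit disk, `F(0)=0`, `F'(0)=1`, and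
`Re (z F''(z) + F'(z)) > 1/2` on the disk, then `Re F'(z) ≥ log 2 > 1/2` on the disk. -/
theorem stmt6 (F : ℂ → ℂ) (hF : DifferentiableOn ℂ F (Metric.ball 0 1))
    (hF0 : F 0 = 0) (hF'0 : deriv F 0 = 1)
    (hre : ∀ z ∈ Metric.ball (0 : ℂ) 1,
      (1 : ℝ) / 2 < (z * deriv (deriv F) z + deriv F z).re) :
    (1 : ℝ) / 2 < Real.log 2 ∧
      ∀ z ∈ Metric.ball (0 : ℂ) 1, Real.log 2 ≤ (deriv F z).re :=
  stmt6_general F hF hF'0 hre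
end

section
/- For every z in the open unit disk, Re((1-z)² H(z)/z) > 1/2, where H(z) = (z - z²/2 + z³/6)/(1-z)³ is the analytic part of the harmonic Koebe function; equivalently, (1-z)²H(z)/z = (1 - z/2 + z²/6)/(1-z) has real part > 1/2 on the disk. -/
lemma key (z : ℂ) (hz : ‖z‖ < 1) :
    (1 : ℝ) / 2 < ((1 - z / 2 + z ^ 2 / 6) / (1 - z)).re := by
  have hx : z.re ^ 2 + z.im ^ 2 < 1 := by
    have := Complex.normSq_apply z
    have h2 : Complex.normSq z < 1 := by
      rw [Complex.normSq_eq_norm_sq]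
      nlinarith [norm_nonneg z, hz]
    nlinarith [h2, Complex.normSq_apply z]
  have hne : (1 - z) ≠ 0 := by
    intro h
    have : z = 1 := by linear_combination -h
    simp [this] at hz
  have hnsq : 0 < Complex.normSq (1 - z) := Complex.normSq_pos.mpr hne
  rw [Complex.div_re]
  have hnsq' : Complex.normSq (1 - z) = (1 - z.re) ^ 2 + z.im ^ 2 := by
    simp [Complex.normSq_apply]; ring
  rw [hnsq']
  have h1 : (1 - z.re) ^ 2 + z.im ^ 2 > 0 := by rw [← hnsq']; exact hnsq
  rw [← add_div, lt_div_iff₀ h1]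
  simp only [Complex.add_re, Complex.sub_re, Complex.one_re, Complex.div_re,
    Complex.add_im, Complex.sub_im, Complex.one_im, Complex.div_im,
    Complex.mul_re, Complex.mul_im, Complex.re_ofNat, Complex.im_ofNat,
    Complex.normSq_ofNat, pow_two, Complex.normSq_apply]
  ring_nf
  nlinarith [hx, sq_nonneg z.im, sq_nonneg (1 - z.re), sq_nonneg (1 + z.re),
    mul_nonneg (sq_nonneg z.im) (sq_nonneg (1 + z.re)), sq_nonneg (z.im * (1 + z.re))]

/-- For the analytic part `H(z) = (z - z²/2 + z³/6)/(1-z)³` of the harmonic Koebe function,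
`Re ((1-z)² H(z) / z) > 1/2` on the unit disk; equivalently
`Re ((1 - z/2 + z²/6)/(1-z)) > 1/2` for `|z| < 1`. -/
theorem stmt9 :
    ∀ z : ℂ, ‖z‖ < 1 →
      (z ≠ 0 →
        (1 : ℝ) / 2 < ((1 - z) ^ 2 * ((z - z ^ 2 / 2 + z ^ 3 / 6) / (1 - z) ^ 3) / z).re) ∧
        (1 : ℝ) / 2 < ((1 - z / 2 + z ^ 2 / 6) / (1 - z)).re := by
  intro z hz
  have hne : (1 - z) ≠ 0 := by
    intro h
    have : z = 1 := by linear_combination -h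
    simp [this] at hz
  refine ⟨fun hz0 => ?_, key z hz⟩
  have heq : (1 - z) ^ 2 * ((z - z ^ 2 / 2 + z ^ 3 / 6) / (1 - z) ^ 3) / z
      = (1 - z / 2 + z ^ 2 / 6) / (1 - z) := by
    field_simp
  rw [heq]
  exact key z hz
end

section
/- If h is analytic on the unit disk, h(0) = 0, h'(0) = 1, and h maps the disk univalently onto a convex domain, then Re(h(z)/z) > 1/2 for all z in the unit disk (Marx–Strohhäcker theorem). -/
/-!
Convexity of `h(𝔻)` passes to every `h(|z| < r)`: Schwarz's lemma applied to `h⁻¹` composed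
with a convex combination of two rescaled copies of `h` keeps the combination inside. A line
supporting `h(|z| < ‖z₀‖)` at `h z₀` then yields `Re (1 + z h''/h') ≥ 0` from the first and
second order conditions along the circle `|z| = ‖z₀‖` and the sign of the radial derivative,
and the open mapping theorem makes the inequality strict.

Jack's lemma (if `w 0 = 0` and `‖w‖` is maximal over `|z| ≤ ‖z₀‖` at `z₀`, then
`z₀ w'(z₀) = k w(z₀)` with `k ≥ 1`), applied to `w = 1 - 1/q`, shows that `Re q > 1/2`
propagates from `q 0 = 1` as long as a suitable combination of `q` and `z q'/q` stays in a
half-plane. Used for `q = z h'/h` and then for `q = h/z` (that is, `dslope h 0`), it gives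
`Re (1 + z h''/h') > 0 ⟹ Re (z h'/h) > 1/2 ⟹ Re (h/z) > 1/2`.
-/

open Metric Set Complex Filter Topology Function

theorem HasDerivAt.nonneg_of_eventually_le_left {f : ℝ → ℝ} {f' a : ℝ} (hf : HasDerivAt f f' a)
    (hle : ∀ᶠ t in 𝓝[<] a, f t ≤ f a) : 0 ≤ f' := by
  refine ge_of_tendsto (hasDerivAt_iff_tendsto_slope_left_right.1 hf).1 ?_
  filter_upwards [hle, self_mem_nhdsWithin] with t ht (hta : t < a)
  rw [slope_def_field]
  exact div_nonneg_of_nonpos (sub_nonpos.2 ht) (sub_nonpos.2 hta.le)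

theorem IsLocalMax.deriv_deriv_nonpos {f : ℝ → ℝ} {a : ℝ} (hf : IsLocalMax f a)
    (hc : ContinuousAt f a) : deriv (deriv f) a ≤ 0 := by
  by_contra! hpos
  have hconst : f =ᶠ[𝓝 a] fun _ ↦ f a :=
    ((isLocalMin_of_deriv_deriv_pos hpos hf.deriv_eq_zero hc).and hf).mono
      fun _ hx ↦ le_antisymm hx.2 hx.1
  have hderiv : deriv f =ᶠ[𝓝 a] fun _ ↦ 0 :=
    hconst.eventuallyEq_nhds.mono fun _ hx ↦ hx.deriv_eq.trans (deriv_const _ _)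
  simp [hderiv.deriv_eq] at hpos

theorem ContinuousLinearMap.hasDerivAt_comp_ofReal (L : ℂ →L[ℝ] ℝ) {e : ℂ → ℂ} {e' : ℂ}
    {t : ℝ} (he : HasDerivAt e e' t) : HasDerivAt (fun s : ℝ ↦ L (e s)) (L e') t :=
  L.hasFDerivAt.comp_hasDerivAt t he.comp_ofReal

theorem ContinuousLinearMap.map_mul_of_map_I_mul_eq_zero (L : ℂ →L[ℝ] ℝ) {a : ℂ}
    (ha : L (I * a) = 0) (x : ℂ) : L (a * x) = x.re * L a := by
  have hax : a * x = x.re • a + x.im • (I * a) := by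
    conv_lhs => rw [← re_add_im x]
    simp only [real_smul]
    ring
  rw [hax, map_add, map_smul, map_smul, ha, smul_zero, add_zero, smul_eq_mul]

theorem hasDerivAt_mul_exp_mul_I (z₀ s : ℂ) :
    HasDerivAt (fun s ↦ z₀ * exp (s * I)) (z₀ * exp (s * I) * I) s := by
  simpa [mul_assoc] using (((hasDerivAt_id s).mul_const I).cexp).const_mul z₀

theorem hasDerivAt_comp_mul_exp_mul_I {G : ℂ → ℂ} {G' z₀ s : ℂ}
    (hG : HasDerivAt G G' (z₀ * exp (s * I))) :
    HasDerivAt (fun s ↦ G (z₀ * exp (s * I))) (G' * (z₀ * exp (s * I) * I)) s :=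
  hG.comp s (hasDerivAt_mul_exp_mul_I z₀ s)

theorem Complex.re_inv_of_norm_sub_one_eq_one {τ : ℂ} (hτ : τ ≠ 0) (h : ‖τ - 1‖ = 1) :
    τ⁻¹.re = 1 / 2 := by
  have hsq : normSq (τ - 1) = 1 := by rw [← Complex.sq_norm, h, one_pow]
  have hτ' : normSq τ ≠ 0 := normSq_eq_zero.not.2 hτ
  simp only [normSq_apply, sub_re, sub_im, one_re, one_im] at hsq hτ'
  rw [inv_re, normSq_apply, div_eq_iff hτ']
  linear_combination (-1 / 2 : ℝ) * hsq

theorem Complex.norm_le_norm_sub_one_of_re_le_half {z : ℂ} (hz : z.re ≤ 1 / 2) :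
    ‖z‖ ≤ ‖z - 1‖ := by
  rw [← sq_le_sq₀ (norm_nonneg _) (norm_nonneg _), Complex.sq_norm, Complex.sq_norm,
    normSq_apply, normSq_apply]
  simp only [sub_re, sub_im, one_re, one_im, sub_zero]
  nlinarith

theorem im_eq_zero_and_one_le_re_of_hasDerivAt_one {G : ℂ → ℂ} {G' : ℂ}
    (hG : DifferentiableOn ℂ G (ball 0 1)) (hG' : HasDerivAt G G' 1) (hG0 : G 0 = 0)
    (hG1 : G 1 = 1) (hle : ∀ ζ, ‖ζ‖ ≤ 1 → ‖G ζ‖ ≤ 1) : G'.im = 0 ∧ 1 ≤ G'.re := by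
  constructor
  · have hcircle := reCLM.hasDerivAt_comp_ofReal (t := 0)
      (hasDerivAt_comp_mul_exp_mul_I (z₀ := 1) (by simpa using hG'))
    have hmax : IsLocalMax (fun θ : ℝ ↦ reCLM (G (1 * exp (θ * I)))) 0 :=
      Eventually.of_forall fun θ ↦ by
        simpa [hG1] using (re_le_norm _).trans (hle _ (by simp [norm_exp_ofReal_mul_I]))
    simpa using hmax.hasDerivAt_eq_zero hcircle
  · have hradial : HasDerivAt (fun t : ℝ ↦ reCLM (G t) - t) (reCLM G' - 1) 1 :=
      (reCLM.hasDerivAt_comp_ofReal (by simpa using hG')).sub (hasDerivAt_id 1)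
    have hschwarz : ∀ t : ℝ, 0 < t → t < 1 → (G t).re ≤ t := fun t ht0 ht1 ↦ by
      have hmaps : MapsTo G (ball 0 1) (closedBall 0 1) := fun ζ hζ ↦
        mem_closedBall_zero_iff.2 (hle ζ (mem_ball_zero_iff.1 hζ).le)
      have ht : ‖(t : ℂ)‖ < 1 := by simpa [abs_of_pos ht0] using ht1
      simpa [abs_of_pos ht0] using
        (re_le_norm _).trans (norm_le_norm_of_mapsTo_ball hG hmaps hG0 ht)
    have := hradial.nonneg_of_eventually_le_left <| by
      filter_upwards [Ioo_mem_nhdsLT (zero_lt_one' ℝ)] with t ht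
      simpa [hG1] using hschwarz t ht.1 ht.2
    simpa using this

theorem exists_mul_deriv_eq_of_isMaxOn {w : ℂ → ℂ} {z₀ : ℂ}
    (hw : DifferentiableOn ℂ w (ball 0 1)) (hz₀ : z₀ ∈ ball (0 : ℂ) 1) (h0 : w 0 = 0)
    (hne : w z₀ ≠ 0) (hmax : IsMaxOn (fun z ↦ ‖w z‖) (closedBall 0 ‖z₀‖) z₀) :
    ∃ k : ℝ, 1 ≤ k ∧ z₀ * deriv w z₀ = k * w z₀ := by
  have hz₀' : ‖z₀‖ < 1 := mem_ball_zero_iff.1 hz₀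
  have hscale : ∀ ζ, ‖ζ‖ ≤ 1 → ‖z₀ * ζ‖ ≤ ‖z₀‖ := fun ζ hζ ↦ by
    simpa [norm_mul] using mul_le_mul_of_nonneg_left hζ (norm_nonneg z₀)
  set G : ℂ → ℂ := fun ζ ↦ w (z₀ * ζ) / w z₀
  have hG : DifferentiableOn ℂ G (ball 0 1) := by
    refine (hw.comp (differentiable_id.const_mul z₀).differentiableOn fun ζ hζ ↦ ?_).div_const _
    exact mem_ball_zero_iff.2 ((hscale ζ (mem_ball_zero_iff.1 hζ).le).trans_lt hz₀')
  have hG' : HasDerivAt G (z₀ * deriv w z₀ / w z₀) 1 := by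
    have hwz₀ : HasDerivAt w (deriv w z₀) (z₀ * 1) := by
      simpa using (hw.differentiableAt (isOpen_ball.mem_nhds hz₀)).hasDerivAt
    simpa [mul_comm] using (hwz₀.comp 1 ((hasDerivAt_id (1 : ℂ)).const_mul z₀)).div_const (w z₀)
  have hle : ∀ ζ, ‖ζ‖ ≤ 1 → ‖G ζ‖ ≤ 1 := fun ζ hζ ↦ by
    rw [norm_div, div_le_one (norm_pos_iff.2 hne)]
    exact isMaxOn_iff.1 hmax _ (mem_closedBall_zero_iff.2 (hscale ζ hζ))
  obtain ⟨him, hre⟩ := im_eq_zero_and_one_le_re_of_hasDerivAt_one hG hG' (by simp [G, h0])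
    (by simp [G, hne]) hle
  refine ⟨_, hre, ?_⟩
  rw [← div_eq_iff hne]
  exact Complex.ext (by simp) (by simp [him])

theorem exists_norm_eq_one_of_one_le_norm {w : ℂ → ℂ} (hw : ContinuousOn w (ball 0 1))
    (h0 : ‖w 0‖ < 1) {z₁ : ℂ} (hz₁ : z₁ ∈ ball (0 : ℂ) 1) (h1 : 1 ≤ ‖w z₁‖) :
    ∃ z₀ ∈ ball (0 : ℂ) 1, ‖w z₀‖ = 1 ∧ ∀ z, ‖z‖ ≤ ‖z₀‖ → ‖w z‖ ≤ 1 := by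
  have hsub : closedBall (0 : ℂ) ‖z₁‖ ⊆ ball 0 1 :=
    closedBall_subset_ball (mem_ball_zero_iff.1 hz₁)
  set S := closedBall (0 : ℂ) ‖z₁‖ ∩ (fun z ↦ ‖w z‖) ⁻¹' Ici 1
  have hS : IsCompact S := (isCompact_closedBall _ _).of_isClosed_subset
    ((hw.mono hsub).norm.preimage_isClosed_of_isClosed isClosed_closedBall isClosed_Ici)
    inter_subset_left
  obtain ⟨z₀, ⟨hz₀S, hz₀1⟩, hmin⟩ :=
    hS.exists_isMinOn ⟨z₁, mem_closedBall_zero_iff.2 le_rfl, h1⟩ continuous_norm.continuousOn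
  have hz₀ : z₀ ≠ 0 := by rintro rfl; exact (h0.trans_le hz₀1).false
  have hz₀z₁ : ‖z₀‖ ≤ ‖z₁‖ := mem_closedBall_zero_iff.1 hz₀S
  have hinner : ∀ z ∈ ball (0 : ℂ) ‖z₀‖, ‖w z‖ ≤ 1 := fun z hz ↦ by
    by_contra! hgt
    have hzS : z ∈ S := ⟨mem_closedBall_zero_iff.2 ((mem_ball_zero_iff.1 hz).le.trans hz₀z₁),
      hgt.le⟩
    exact (mem_ball_zero_iff.1 hz).not_ge (hmin hzS)
  have hcont : ContinuousOn (fun z ↦ ‖w z‖) (closure (ball (0 : ℂ) ‖z₀‖)) := by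
    rw [closure_ball 0 (norm_ne_zero_iff.2 hz₀)]
    exact (hw.mono ((closedBall_subset_closedBall hz₀z₁).trans hsub)).norm
  have hclosed : ∀ z, ‖z‖ ≤ ‖z₀‖ → ‖w z‖ ≤ 1 := fun z hz ↦
    le_on_closure hinner hcont continuousOn_const
      (by rwa [closure_ball 0 (norm_ne_zero_iff.2 hz₀), mem_closedBall_zero_iff])
  exact ⟨z₀, hsub hz₀S, le_antisymm (hclosed z₀ le_rfl) hz₀1, hclosed⟩

-- At the first point where `Re q` reaches `1/2`, Jack's lemma gives `z q'/q = k (q - 1)` with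
-- `k ≥ 1`, so the real part bounded in `H` equals `(a + 2b - k)/2` there.
theorem half_lt_re_of_lt_re_add_mul_logDeriv {q : ℂ → ℂ} (hq : DifferentiableOn ℂ q (ball 0 1))
    (hq0 : q 0 = 1) (hne : ∀ z ∈ ball (0 : ℂ) 1, q z ≠ 0) (a b : ℝ)
    (H : ∀ z ∈ ball (0 : ℂ) 1, (a + 2 * b - 1) / 2 < (a * q z + b + z * logDeriv q z).re) :
    ∀ z ∈ ball (0 : ℂ) 1, 1 / 2 < (q z).re := by
  intro z₁ hz₁
  by_contra! hle
  set w : ℂ → ℂ := fun z ↦ 1 - (q z)⁻¹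
  have hw : DifferentiableOn ℂ w (ball 0 1) := (differentiableOn_const 1).sub (hq.inv hne)
  have hw0 : w 0 = 0 := by simp [w, hq0]
  have h1 : 1 ≤ ‖w z₁‖ := by
    have hq₁ : q z₁ ≠ 0 := hne z₁ hz₁
    rw [show w z₁ = (q z₁ - 1) / q z₁ by simp only [w]; field_simp, norm_div,
      le_div_iff₀ (norm_pos_iff.2 hq₁), one_mul]
    exact norm_le_norm_sub_one_of_re_le_half hle
  obtain ⟨z₀, hz₀, hw1, hmax⟩ :=
    exists_norm_eq_one_of_one_le_norm hw.continuousOn (by simp [hw0]) hz₁ h1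
  have hwne : w z₀ ≠ 0 := by rintro h; simp [h] at hw1
  obtain ⟨k, hk, hjack⟩ :=
    exists_mul_deriv_eq_of_isMaxOn hw hz₀ hw0 hwne
      (isMaxOn_iff.2 fun z hz ↦ hw1 ▸ hmax z (mem_closedBall_zero_iff.1 hz))
  have hqz₀ := hne z₀ hz₀
  have hderiv : deriv w z₀ = deriv q z₀ / q z₀ ^ 2 := by
    have : HasDerivAt w _ z₀ :=
      ((hq.differentiableAt (isOpen_ball.mem_nhds hz₀)).hasDerivAt.inv hqz₀).const_sub 1
    rw [this.deriv]
    ring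
  have hre : (q z₀).re = 1 / 2 := by
    simpa using re_inv_of_norm_sub_one_eq_one (inv_ne_zero hqz₀)
      (by rwa [norm_sub_rev] at hw1)
  have hlog : z₀ * logDeriv q z₀ = k * (q z₀ - 1) := by
    rw [hderiv] at hjack
    simp only [w] at hjack
    rw [logDeriv_apply]
    field_simp at hjack ⊢
    linear_combination hjack
  have := H z₀ hz₀
  rw [hlog] at this
  simp only [add_re, mul_re, ofReal_re, ofReal_im, sub_re, one_re, hre] at this
  nlinarith

theorem continuousAt_invFunOn_of_isOpen_image {X Y : Type*} [TopologicalSpace X]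
    [TopologicalSpace Y] [Nonempty X] {f : X → Y} {U : Set X} (hU : IsOpen U) (hinj : InjOn f U)
    (hopen : ∀ s ⊆ U, IsOpen s → IsOpen (f '' s)) {z : X} (hz : z ∈ U) :
    ContinuousAt (invFunOn f U) (f z) := by
  rw [ContinuousAt, hinj.leftInvOn_invFunOn hz]
  refine (nhds_basis_opens z).tendsto_right_iff.2 fun V ⟨hzV, hVo⟩ ↦ ?_
  filter_upwards [(hopen _ inter_subset_right (hVo.inter hU)).mem_nhds ⟨z, ⟨hzV, hz⟩, rfl⟩]
  rintro _ ⟨ζ, ⟨hζV, hζU⟩, rfl⟩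
  rwa [hinj.leftInvOn_invFunOn hζU]

section InjOn

variable {f : ℂ → ℂ} {U : Set ℂ}

theorem Set.InjOn.isOpen_image (hinj : InjOn f U) (hf : DifferentiableOn ℂ f U)
    (hU : IsOpen U) (hUc : IsPreconnected U) : ∀ s ⊆ U, IsOpen s → IsOpen (f '' s) := by
  intro s hs hso
  rcases (hf.analyticOnNhd hU).is_constant_or_isOpen hUc with ⟨w, hw⟩ | hopen
  · rcases s.eq_empty_or_nonempty with rfl | ⟨z, hz⟩
    · simp
    · have hsub : s.Subsingleton := fun x hx y hy ↦
        hinj (hs hx) (hs hy) (by rw [hw x (hs hx), hw y (hs hy)])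
      exact absurd (hsub.eq_singleton_of_mem hz ▸ hso) (not_isOpen_singleton z)
  · exact hopen s hs hso

theorem Set.InjOn.hasDerivAt_invFunOn (hinj : InjOn f U) (hf : DifferentiableOn ℂ f U)
    (hU : IsOpen U) (hUc : IsPreconnected U) {z : ℂ} (hz : z ∈ U) (hd : deriv f z ≠ 0) :
    HasDerivAt (invFunOn f U) (deriv f z)⁻¹ (f z) := by
  refine HasDerivAt.of_local_left_inverse (f := f)
    (continuousAt_invFunOn_of_isOpen_image hU hinj (hinj.isOpen_image hf hU hUc) hz)
    ?_ hd ?_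
  · rw [hinj.leftInvOn_invFunOn hz]
    exact (hf.differentiableAt (hU.mem_nhds hz)).hasDerivAt
  · filter_upwards [(hinj.isOpen_image hf hU hUc U subset_rfl hU).mem_nhds ⟨z, hz, rfl⟩]
      with w hw using invFunOn_eq hw

theorem Set.InjOn.differentiableAt_invFunOn (hinj : InjOn f U) (hf : DifferentiableOn ℂ f U)
    (hU : IsOpen U) (hUc : IsPreconnected U) {z : ℂ} (hz : z ∈ U)
    (hpunct : ∀ᶠ ζ in 𝓝[≠] z, deriv f ζ ≠ 0) : DifferentiableAt ℂ (invFunOn f U) (f z) := by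
  set k := invFunOn f U
  have hopen := hinj.isOpen_image hf hU hUc
  have hk : ContinuousAt k (f z) := continuousAt_invFunOn_of_isOpen_image hU hinj hopen hz
  have hnear : ∀ᶠ w in 𝓝 (f z), k w ∈ U ∧ (k w ≠ z → deriv f (k w) ≠ 0) := by
    refine hk.eventually (p := fun ζ ↦ ζ ∈ U ∧ (ζ ≠ z → deriv f ζ ≠ 0)) ?_
    rw [show k (f z) = z from hinj.leftInvOn_invFunOn hz]
    exact (hU.eventually_mem hz).and (eventually_nhdsWithin_iff.1 hpunct)
  have hkd : ∀ᶠ w in 𝓝[≠] f z, DifferentiableAt ℂ k w := by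
    rw [eventually_nhdsWithin_iff]
    filter_upwards [hnear, (hopen U subset_rfl hU).mem_nhds ⟨z, hz, rfl⟩]
      with w ⟨hwU, hwd⟩ hwf hwne
    have hfk : f (k w) = w := invFunOn_eq hwf
    have hkw : k w ≠ z := by
      rintro hkw
      exact hwne (by rw [mem_singleton_iff, ← hfk, hkw])
    simpa [hfk] using (hinj.hasDerivAt_invFunOn hf hU hUc hwU (hwd hkw)).differentiableAt
  exact (analyticAt_of_differentiable_on_punctured_nhds_of_continuousAt hkd hk).differentiableAt

theorem Set.InjOn.deriv_ne_zero (hinj : InjOn f U) (hf : DifferentiableOn ℂ f U)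
    (hU : IsOpen U) (hUc : IsPreconnected U) {z : ℂ} (hz : z ∈ U) : deriv f z ≠ 0 := by
  intro hzero
  rcases ((hf.analyticOnNhd hU).deriv z hz).eventually_eq_zero_or_eventually_ne_zero
    with hloc | hpunct
  · obtain ⟨ε, hε, hball⟩ := eventually_nhds_iff_ball.1 ((hU.eventually_mem hz).and hloc)
    have hsub : ball z ε ⊆ U := fun ζ hζ ↦ (hball ζ hζ).1
    have himage : f '' ball z ε = {f z} := by
      refine (eq_singleton_iff_unique_mem.2 ⟨⟨z, mem_ball_self hε, rfl⟩, ?_⟩)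
      rintro _ ⟨ζ, hζ, rfl⟩
      exact isOpen_ball.is_const_of_deriv_eq_zero (convex_ball z ε).isPreconnected
        (hf.mono hsub) (fun ξ hξ ↦ (hball ξ hξ).2) hζ (mem_ball_self hε)
    exact not_isOpen_singleton (f z)
      (himage ▸ hinj.isOpen_image hf hU hUc _ hsub isOpen_ball)
  · -- the critical point is isolated, so the inverse is still differentiable at `f z`,
    -- which is incompatible with the chain rule for `invFunOn f U ∘ f = id`
    have hcomp : HasDerivAt (invFunOn f U ∘ f) (deriv (invFunOn f U) (f z) * deriv f z) z :=
      (hinj.differentiableAt_invFunOn hf hU hUc hz hpunct).hasDerivAt.comp z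
        (hf.differentiableAt (hU.mem_nhds hz)).hasDerivAt
    have hid : invFunOn f U ∘ f =ᶠ[𝓝 z] id :=
      (hU.eventually_mem hz).mono fun ζ hζ ↦ hinj.leftInvOn_invFunOn hζ
    have := hcomp.unique ((hasDerivAt_id z).congr_of_eventuallyEq hid)
    rw [hzero, mul_zero] at this
    exact zero_ne_one this

theorem Set.InjOn.differentiableOn_invFunOn (hinj : InjOn f U) (hf : DifferentiableOn ℂ f U)
    (hU : IsOpen U) (hUc : IsPreconnected U) : DifferentiableOn ℂ (invFunOn f U) (f '' U) := by
  rintro _ ⟨z, hz, rfl⟩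
  exact (hinj.hasDerivAt_invFunOn hf hU hUc hz
    (hinj.deriv_ne_zero hf hU hUc hz)).differentiableAt.differentiableWithinAt

end InjOn

theorem convex_image_ball {h : ℂ → ℂ} (hh : DifferentiableOn ℂ h (ball 0 1))
    (hinj : InjOn h (ball 0 1)) (hconv : Convex ℝ (h '' ball 0 1)) {r : ℝ} (hr : r ≤ 1) :
    Convex ℝ (h '' ball 0 r) := by
  have hk := hinj.differentiableOn_invFunOn hh isOpen_ball (convex_ball 0 1).isPreconnected
  set k := invFunOn h (ball 0 1)
  rintro _ ⟨z₁, hz₁, rfl⟩ _ ⟨z₂, hz₂, rfl⟩ a b ha hb hab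
  obtain ⟨ρ, hρ, hρr⟩ := exists_between
    (max_lt (mem_ball_zero_iff.1 hz₁) (mem_ball_zero_iff.1 hz₂))
  have hρ0 : 0 < ρ := (norm_nonneg z₁).trans_lt ((le_max_left _ _).trans_lt hρ)
  have hscale : ∀ z : ℂ, ‖z‖ < ρ → MapsTo (fun ζ ↦ z / ρ * ζ) (ball 0 1) (ball 0 1) :=
    fun z hz ζ hζ ↦ by
      have : ‖z / ρ‖ < 1 := by
        rwa [norm_div, norm_real, Real.norm_of_nonneg hρ0.le, div_lt_one hρ0]
      simpa [norm_mul] using mul_lt_one_of_nonneg_of_lt_one_left (norm_nonneg _) this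
        (mem_ball_zero_iff.1 hζ).le
  have hz₁ρ : ‖z₁‖ < ρ := (le_max_left _ _).trans_lt hρ
  have hz₂ρ : ‖z₂‖ < ρ := (le_max_right _ _).trans_lt hρ
  -- Schwarz's lemma for `h⁻¹ ∘ F` places `F ρ = a • h z₁ + b • h z₂` in `h '' closedBall 0 ρ`
  set F : ℂ → ℂ := fun ζ ↦ a • h (z₁ / ρ * ζ) + b • h (z₂ / ρ * ζ)
  have hFmaps : MapsTo F (ball 0 1) (h '' ball 0 1) := fun ζ hζ ↦
    hconv (mem_image_of_mem h (hscale z₁ hz₁ρ hζ)) (mem_image_of_mem h (hscale z₂ hz₂ρ hζ))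
      ha hb hab
  have hFd : DifferentiableOn ℂ F (ball 0 1) := by
    have hcomp : ∀ z : ℂ, ‖z‖ < ρ → DifferentiableOn ℂ (fun ζ ↦ h (z / ρ * ζ)) (ball 0 1) :=
      fun z hz ↦ hh.comp (differentiable_id.const_mul _).differentiableOn (hscale z hz)
    simp only [F, real_smul]
    exact ((hcomp z₁ hz₁ρ).const_mul _).add ((hcomp z₂ hz₂ρ).const_mul _)
  have hg0 : k (F 0) = 0 := by
    rw [show F 0 = h 0 by simp only [F, mul_zero, ← add_smul, hab, one_smul]]
    exact hinj.leftInvOn_invFunOn (mem_ball_self one_pos)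
  have hρ1 : ‖(ρ : ℂ)‖ < 1 := by
    rw [norm_real, Real.norm_of_nonneg hρ0.le]; exact hρr.trans_le hr
  have hschwarz : ‖k (F ρ)‖ ≤ ‖(ρ : ℂ)‖ :=
    norm_le_norm_of_mapsTo_ball (hk.comp hFd hFmaps)
      (fun ζ hζ ↦ ball_subset_closedBall (invFunOn_mem (hFmaps hζ))) hg0 hρ1
  refine ⟨k (F ρ), mem_ball_zero_iff.2 ?_, ?_⟩
  · rw [norm_real, Real.norm_of_nonneg hρ0.le] at hschwarz
    exact hschwarz.trans_lt hρr
  · rw [invFunOn_eq (hFmaps (mem_ball_zero_iff.2 hρ1))]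
    simp [F, div_mul_cancel₀ _ (ofReal_ne_zero.2 hρ0.ne')]

theorem map_mul_deriv_nonneg_of_le_on_radius {h : ℂ → ℂ} {z₀ : ℂ} (hd : DifferentiableAt ℂ h z₀)
    (L : ℂ →L[ℝ] ℝ) (hle : ∀ t : ℝ, 0 < t → t < 1 → L (h (t * z₀)) ≤ L (h z₀)) :
    0 ≤ L (z₀ * deriv h z₀) := by
  have hradial : HasDerivAt (fun s : ℂ ↦ h (s * z₀)) (deriv h z₀ * z₀) ((1 : ℝ) : ℂ) := by
    have hd' : HasDerivAt h (deriv h z₀) (((1 : ℝ) : ℂ) * z₀) := by simpa using hd.hasDerivAt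
    have hlin : HasDerivAt (fun s : ℂ ↦ s * z₀) z₀ ((1 : ℝ) : ℂ) := by
      simpa using (hasDerivAt_id ((1 : ℝ) : ℂ)).mul_const z₀
    exact hd'.comp (h := fun s : ℂ ↦ s * z₀) _ hlin
  rw [mul_comm]
  refine (L.hasDerivAt_comp_ofReal hradial).nonneg_of_eventually_le_left ?_
  filter_upwards [Ioo_mem_nhdsLT (zero_lt_one' ℝ)] with t ht
  simpa using hle t ht.1 ht.2

theorem map_I_mul_eq_zero_and_nonneg_of_le_on_circle {h : ℂ → ℂ} {z₀ : ℂ}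
    (hh : DifferentiableOn ℂ h (ball 0 1)) (hz₀ : z₀ ∈ ball (0 : ℂ) 1) (L : ℂ →L[ℝ] ℝ)
    (hle : ∀ θ : ℝ, L (h (z₀ * exp (θ * I))) ≤ L (h z₀)) :
    L (I * (z₀ * deriv h z₀)) = 0 ∧
      0 ≤ L (z₀ ^ 2 * deriv (deriv h) z₀ + z₀ * deriv h z₀) := by
  have hA := hh.analyticOnNhd isOpen_ball
  have hcircle : ∀ θ : ℝ, z₀ * exp (θ * I) ∈ ball (0 : ℂ) 1 := fun θ ↦ by
    simpa [norm_mul, norm_exp_ofReal_mul_I] using hz₀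
  set v : ℂ → ℂ := fun s ↦ deriv h (z₀ * exp (s * I)) * (z₀ * exp (s * I) * I)
  have hu : ∀ θ : ℝ, HasDerivAt (fun θ : ℝ ↦ L (h (z₀ * exp (θ * I)))) (L (v θ)) θ := fun θ ↦
    L.hasDerivAt_comp_ofReal
      (hasDerivAt_comp_mul_exp_mul_I (hA _ (hcircle θ)).differentiableAt.hasDerivAt)
  have hv : HasDerivAt (fun θ : ℝ ↦ L (v θ))
      (L (-(z₀ ^ 2 * deriv (deriv h) z₀ + z₀ * deriv h z₀))) 0 := by
    have hd2 : HasDerivAt (deriv h) (deriv (deriv h) z₀) (z₀ * exp (((0 : ℝ) : ℂ) * I)) := by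
      simpa using (hA.deriv z₀ hz₀).differentiableAt.hasDerivAt
    have : HasDerivAt v _ ((0 : ℝ) : ℂ) := (hasDerivAt_comp_mul_exp_mul_I hd2).mul
      ((hasDerivAt_mul_exp_mul_I z₀ _).mul_const I)
    convert L.hasDerivAt_comp_ofReal this using 2
    simp only [ofReal_zero, zero_mul, exp_zero, mul_one]
    linear_combination (-(z₀ ^ 2 * deriv (deriv h) z₀) - z₀ * deriv h z₀) * I_sq
  have hmax : IsLocalMax (fun θ : ℝ ↦ L (h (z₀ * exp (θ * I)))) 0 :=
    Eventually.of_forall fun θ ↦ by simpa using hle θ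
  constructor
  · have := hmax.hasDerivAt_eq_zero (hu 0)
    simp only [v, ofReal_zero, zero_mul, exp_zero, mul_one] at this
    convert this using 2
    ring
  · have hderiv : deriv (fun θ : ℝ ↦ L (h (z₀ * exp (θ * I)))) = fun θ : ℝ ↦ L (v θ) :=
      funext fun θ ↦ (hu θ).deriv
    have := hmax.deriv_deriv_nonpos (hu 0).continuousAt
    rw [hderiv, hv.deriv, map_neg] at this
    linarith

theorem zero_le_re_one_add_mul_logDeriv_deriv_of_forall_lt {h : ℂ → ℂ} {z₀ : ℂ}
    (hh : DifferentiableOn ℂ h (ball 0 1)) (hz₀ : z₀ ∈ ball (0 : ℂ) 1) (hz₀0 : z₀ ≠ 0)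
    (hd : deriv h z₀ ≠ 0) (L : ℂ →L[ℝ] ℝ) (hL : ∀ ζ ∈ ball (0 : ℂ) ‖z₀‖, L (h ζ) < L (h z₀)) :
    0 ≤ (1 + z₀ * logDeriv (deriv h) z₀).re := by
  have hr : 0 < ‖z₀‖ := norm_pos_iff.2 hz₀0
  set a := z₀ * deriv h z₀
  have hrad : 0 ≤ L a := by
    refine map_mul_deriv_nonneg_of_le_on_radius (hh.differentiableAt (isOpen_ball.mem_nhds hz₀)) L
      fun t ht0 ht1 ↦ (hL _ ?_).le
    rw [mem_ball_zero_iff, norm_mul, norm_real, Real.norm_of_nonneg ht0.le]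
    exact mul_lt_of_lt_one_left hr ht1
  have hcircle : ∀ ζ, ‖ζ‖ ≤ ‖z₀‖ → L (h ζ) ≤ L (h z₀) := by
    have hcont : ContinuousOn (fun ζ ↦ L (h ζ)) (closure (ball (0 : ℂ) ‖z₀‖)) := by
      rw [closure_ball 0 hr.ne']
      exact L.continuous.comp_continuousOn
        (hh.continuousOn.mono (closedBall_subset_ball (mem_ball_zero_iff.1 hz₀)))
    intro ζ hζ
    exact le_on_closure (fun ζ hζ ↦ (hL ζ hζ).le) hcont continuousOn_const
      (by rwa [closure_ball 0 hr.ne', mem_closedBall_zero_iff])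
  obtain ⟨hI, hsecond⟩ := map_I_mul_eq_zero_and_nonneg_of_le_on_circle hh hz₀ L fun θ ↦
    hcircle _ (by simp [norm_exp_ofReal_mul_I])
  -- `a` and `I * a` span `ℂ` over `ℝ`, so `L a = 0` would force `L = 0`
  have hLa : 0 < L a := by
    refine hrad.lt_of_ne fun hzero ↦ ?_
    have hL0 : ∀ x, L x = 0 := fun x ↦ by
      rw [← mul_div_cancel₀ x (mul_ne_zero hz₀0 hd), L.map_mul_of_map_I_mul_eq_zero hI,
        ← hzero, mul_zero]
    simpa [hL0] using hL 0 (mem_ball_self hr)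
  have hkey : z₀ ^ 2 * deriv (deriv h) z₀ + a = a * (1 + z₀ * logDeriv (deriv h) z₀) := by
    rw [logDeriv_apply]
    field_simp
    ring
  rw [hkey, L.map_mul_of_map_I_mul_eq_zero hI] at hsecond
  exact nonneg_of_mul_nonneg_left hsecond hLa

theorem zero_le_re_one_add_mul_logDeriv_deriv_of_convex {h : ℂ → ℂ}
    (hh : DifferentiableOn ℂ h (ball 0 1)) (hinj : InjOn h (ball 0 1))
    (hconv : Convex ℝ (h '' ball 0 1)) {z₀ : ℂ} (hz₀ : z₀ ∈ ball (0 : ℂ) 1) :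
    0 ≤ (1 + z₀ * logDeriv (deriv h) z₀).re := by
  rcases eq_or_ne z₀ 0 with rfl | hz₀0
  · simp
  have hsub : ball (0 : ℂ) ‖z₀‖ ⊆ ball 0 1 := ball_subset_ball (mem_ball_zero_iff.1 hz₀).le
  have hpre := (convex_ball (0 : ℂ) 1).isPreconnected
  have hnot : h z₀ ∉ h '' ball 0 ‖z₀‖ := by
    rintro ⟨ζ, hζ, heq⟩
    rw [hinj (hsub hζ) hz₀ heq, mem_ball_zero_iff] at hζ
    exact lt_irrefl _ hζ
  obtain ⟨L, hL⟩ := geometric_hahn_banach_open_point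
    (convex_image_ball hh hinj hconv (mem_ball_zero_iff.1 hz₀).le)
    (hinj.isOpen_image hh isOpen_ball hpre _ hsub isOpen_ball) hnot
  exact zero_le_re_one_add_mul_logDeriv_deriv_of_forall_lt hh hz₀ hz₀0
    (hinj.deriv_ne_zero hh isOpen_ball hpre hz₀) L fun ζ hζ ↦ hL _ (mem_image_of_mem h hζ)

theorem AnalyticOnNhd.lt_re_of_le_re {g : ℂ → ℂ} {U : Set ℂ} {c : ℝ}
    (hg : AnalyticOnNhd ℂ g U) (hU : IsOpen U) (hUc : IsPreconnected U)
    (hle : ∀ z ∈ U, c ≤ (g z).re) {z₀ : ℂ} (hz₀ : z₀ ∈ U) (hlt : c < (g z₀).re) :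
    ∀ z ∈ U, c < (g z).re := by
  intro z hz
  rcases hg.is_constant_or_isOpen hUc with ⟨w, hw⟩ | hopen
  · rwa [hw z hz, ← hw z₀ hz₀]
  · have : g '' U ⊆ interior {w : ℂ | c ≤ w.re} :=
      (hopen U subset_rfl hU).subset_interior_iff.2 (image_subset_iff.2 hle)
    rw [interior_setOfPred_le_re] at this
    exact this (mem_image_of_mem g hz)

theorem zero_lt_re_one_add_mul_logDeriv_deriv_of_convex {h : ℂ → ℂ}
    (hh : DifferentiableOn ℂ h (ball 0 1)) (hinj : InjOn h (ball 0 1))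
    (hconv : Convex ℝ (h '' ball 0 1)) :
    ∀ z ∈ ball (0 : ℂ) 1, 0 < (1 + z * logDeriv (deriv h) z).re := by
  have hpre := (convex_ball (0 : ℂ) 1).isPreconnected
  have hA := hh.analyticOnNhd isOpen_ball
  have hQ : AnalyticOnNhd ℂ (fun z ↦ 1 + z * logDeriv (deriv h) z) (ball 0 1) := by
    simp only [logDeriv_apply]
    exact analyticOnNhd_const.add (analyticOnNhd_id.mul (hA.deriv.deriv.div hA.deriv
      fun z hz ↦ hinj.deriv_ne_zero hh isOpen_ball hpre hz))
  exact hQ.lt_re_of_le_re isOpen_ball hpre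
    (fun z hz ↦ zero_le_re_one_add_mul_logDeriv_deriv_of_convex hh hinj hconv hz)
    (mem_ball_self one_pos) (by simp)

theorem deriv_eq_dslope_add_sub_mul_deriv_dslope {𝕜 : Type*} [NontriviallyNormedField 𝕜]
    {f : 𝕜 → 𝕜} {a z : 𝕜} (hd : DifferentiableAt 𝕜 (dslope f a) z) :
    deriv f z = dslope f a z + (z - a) * deriv (dslope f a) z := by
  have hf : (fun z ↦ (z - a) * dslope f a z + f a) = f :=
    funext fun z ↦ by rw [← smul_eq_mul, sub_smul_dslope, sub_add_cancel]
  have : HasDerivAt (fun z ↦ (z - a) * dslope f a z + f a)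
      (1 * dslope f a z + (z - a) * deriv (dslope f a) z) z :=
    (((hasDerivAt_id z).sub_const a).mul hd.hasDerivAt).add_const (f a)
  rw [hf] at this
  rw [this.deriv, one_mul]

theorem deriv_div_dslope_zero {f : ℂ → ℂ} {z : ℂ} (hd : DifferentiableAt ℂ (dslope f 0) z)
    (hne : dslope f 0 z ≠ 0) : deriv f z / dslope f 0 z = 1 + z * logDeriv (dslope f 0) z := by
  rw [deriv_eq_dslope_add_sub_mul_deriv_dslope hd, logDeriv_apply, sub_zero]
  field_simp

theorem differentiableOn_dslope_zero {f : ℂ → ℂ} (hf : DifferentiableOn ℂ f (ball 0 1)) :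
    DifferentiableOn ℂ (dslope f 0) (ball 0 1) :=
  (differentiableOn_dslope (isOpen_ball.mem_nhds (mem_ball_self one_pos))).2 hf

theorem half_lt_re_deriv_div_dslope {h : ℂ → ℂ} (hh : DifferentiableOn ℂ h (ball 0 1))
    (h'0 : deriv h 0 = 1) (hP : ∀ z ∈ ball (0 : ℂ) 1, dslope h 0 z ≠ 0)
    (hd : ∀ z ∈ ball (0 : ℂ) 1, deriv h z ≠ 0)
    (hQ : ∀ z ∈ ball (0 : ℂ) 1, 0 < (1 + z * logDeriv (deriv h) z).re) :
    ∀ z ∈ ball (0 : ℂ) 1, 1 / 2 < (deriv h z / dslope h 0 z).re := by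
  have hh' := (hh.analyticOnNhd isOpen_ball).deriv.differentiableOn
  have hPd := differentiableOn_dslope_zero hh
  refine half_lt_re_of_lt_re_add_mul_logDeriv (hh'.div hPd hP) (by simp [dslope_same, h'0])
    (fun z hz ↦ div_ne_zero (hd z hz) (hP z hz)) 1 0 fun z hz ↦ ?_
  have hPz := hPd.differentiableAt (isOpen_ball.mem_nhds hz)
  rw [logDeriv_div z (hd z hz) (hP z hz) (hh'.differentiableAt (isOpen_ball.mem_nhds hz)) hPz,
    deriv_div_dslope_zero hPz (hP z hz)]
  convert hQ z hz using 1
  · norm_num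
  · push_cast
    ring_nf

theorem half_lt_re_dslope {h : ℂ → ℂ} (hh : DifferentiableOn ℂ h (ball 0 1))
    (h'0 : deriv h 0 = 1) (hP : ∀ z ∈ ball (0 : ℂ) 1, dslope h 0 z ≠ 0)
    (hp : ∀ z ∈ ball (0 : ℂ) 1, 1 / 2 < (deriv h z / dslope h 0 z).re) :
    ∀ z ∈ ball (0 : ℂ) 1, 1 / 2 < (dslope h 0 z).re := by
  have hPd := differentiableOn_dslope_zero hh
  refine half_lt_re_of_lt_re_add_mul_logDeriv hPd (by simp [dslope_same, h'0]) hP 0 1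
    fun z hz ↦ ?_
  have := hp z hz
  rw [deriv_div_dslope_zero (hPd.differentiableAt (isOpen_ball.mem_nhds hz)) (hP z hz)] at this
  convert this using 1
  · norm_num
  · push_cast
    ring_nf

/-- Marx–Strohhäcker: if `h` is analytic and injective on the unit disk, `h(0)=0`,
`h'(0)=1`, and the image of the disk is convex, then `Re (h(z)/z) > 1/2` on the disk. -/
theorem stmt11 (h : ℂ → ℂ)
    (hh : DifferentiableOn ℂ h (Metric.ball 0 1))
    (hinj : Set.InjOn h (Metric.ball 0 1))
    (h0 : h 0 = 0) (h'0 : deriv h 0 = 1)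
    (hconv : Convex ℝ (h '' Metric.ball 0 1)) :
    ∀ z ∈ Metric.ball (0 : ℂ) 1, z ≠ 0 → (1 : ℝ) / 2 < (h z / z).re := by
  have hpre := (convex_ball (0 : ℂ) 1).isPreconnected
  have hslope : ∀ z ≠ 0, dslope h 0 z = h z / z := fun z hz ↦ by
    rw [dslope_of_ne _ hz, slope_def_field, h0, sub_zero, sub_zero]
  have hP : ∀ z ∈ ball (0 : ℂ) 1, dslope h 0 z ≠ 0 := fun z hz ↦ by
    rcases eq_or_ne z 0 with rfl | hz0
    · simp [dslope_same, h'0]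
    · rw [hslope z hz0]
      exact div_ne_zero (fun hhz ↦ hz0 (hinj hz (mem_ball_self one_pos) (hhz.trans h0.symm))) hz0
  intro z hz hz0
  rw [← hslope z hz0]
  exact half_lt_re_dslope hh h'0 hP (half_lt_re_deriv_div_dslope hh h'0 hP
    (fun z hz ↦ hinj.deriv_ne_zero hh isOpen_ball hpre hz)
    (zero_lt_re_one_add_mul_logDeriv_deriv_of_convex hh hinj hconv)) z hz
end
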